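/- Let a, b : ℝ^d → ℝ be measurable functions such that exp(a) and exp(b) are integrable with positive integrals, and suppose |a(x) - b(x)| ≤ K for all x and some K ≥ 0. Define the normalized densities π_a(x) = exp(a(x)) / ∫ exp(a) and π_b(x) = exp(b(x)) / ∫ exp(b). Then the total variation distance between π_a and π_b, i.e., (1/2)∫ |π_a(x) - π_b(x)| dx, is at most 1 - exp(-K). -/
import Mathlib


open MeasureTheory Real

/-- If `|a - b| ≤ K` pointwise, the total variation distance between the
normalized densities proportional to `exp a` and `exp b` is at most `1 - exp (-K)`. -/
theorem stmt_0 (d : ℕ) (a b : (Fin d → ℝ) → ℝ) (K : ℝ) (hK : 0 ≤ K)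
    (ha : Measurable a) (hb : Measurable b)
    (hia : Integrable (fun x => Real.exp (a x)))
    (hib : Integrable (fun x => Real.exp (b x)))
    (hpa : 0 < ∫ x, Real.exp (a x))
    (hpb : 0 < ∫ x, Real.exp (b x))
    (hab : ∀ x, |a x - b x| ≤ K) :
    (1/2) * ∫ x, |Real.exp (a x) / (∫ y, Real.exp (a y))
        - Real.exp (b x) / (∫ y, Real.exp (b y))| ≤ 1 - Real.exp (-K) := by
  set Za := ∫ y, Real.exp (a y) with hZa
  set Zb := ∫ y, Real.exp (b y) with hZb
  set p : (Fin d → ℝ) → ℝ := fun x => Real.exp (a x) / Za with hp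
  set q : (Fin d → ℝ) → ℝ := fun x => Real.exp (b x) / Zb with hq
  have hip : Integrable p := hia.div_const _
  have hiq : Integrable q := hib.div_const _
  have hintp : ∫ x, p x = 1 := by
    simp only [hp, integral_div]
    exact div_self hpa.ne'
  have hintq : ∫ x, q x = 1 := by
    simp only [hq, integral_div]
    exact div_self hpb.ne'
  set M := max Za Zb with hM
  have hM0 : 0 < M := lt_max_of_lt_left hpa
  have himin : Integrable (fun x => min (p x) (q x)) := hip.inf hiq
  have himaxe : Integrable (fun x => max (Real.exp (a x)) (Real.exp (b x))) :=
    hia.sup hib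
  have habs : ∀ x, |p x - q x| = p x + q x - 2 * min (p x) (q x) := by
    intro x
    rcases le_total (p x) (q x) with h | h
    · rw [min_eq_left h, abs_of_nonpos (by linarith)]; ring
    · rw [min_eq_right h, abs_of_nonneg (by linarith)]; ring
  have hsum : Integrable (fun x => p x + q x) := hip.add hiq
  have hint_abs : ∫ x, |p x - q x|
      = (∫ x, p x) + (∫ x, q x) - 2 * ∫ x, min (p x) (q x) := by
    rw [show (fun x => |p x - q x|)
        = fun x => (p x + q x) - 2 * min (p x) (q x) from funext habs]
    rw [integral_sub hsum (himin.const_mul 2), integral_add hip hiq,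
      integral_const_mul]
  have hpw : ∀ x, Real.exp (-K) * (max (Real.exp (a x)) (Real.exp (b x)) / M)
      ≤ min (p x) (q x) := by
    intro x
    have hba : b x - K ≤ a x := by have := abs_le.mp (hab x); linarith
    have hab' : a x - K ≤ b x := by have := abs_le.mp (hab x); linarith
    have hK1 : Real.exp (-K) ≤ 1 := Real.exp_le_one_iff.mpr (by linarith)
    have h1 : Real.exp (-K) * max (Real.exp (a x)) (Real.exp (b x))
        ≤ min (Real.exp (a x)) (Real.exp (b x)) := by
      rw [mul_max_of_nonneg _ _ (Real.exp_pos (-K)).le]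
      refine le_min (max_le ?_ ?_) (max_le ?_ ?_)
      · nlinarith [Real.exp_pos (a x)]
      · rw [← Real.exp_add]; exact Real.exp_le_exp.mpr (by linarith)
      · rw [← Real.exp_add]; exact Real.exp_le_exp.mpr (by linarith)
      · nlinarith [Real.exp_pos (b x)]
    have h2 : min (Real.exp (a x)) (Real.exp (b x)) / M ≤ min (p x) (q x) := by
      refine le_min ?_ ?_
      · calc min (Real.exp (a x)) (Real.exp (b x)) / M
            ≤ Real.exp (a x) / M := by gcongr; exact min_le_left _ _
          _ ≤ Real.exp (a x) / Za := by
              gcongr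
              exact le_max_left _ _
      · calc min (Real.exp (a x)) (Real.exp (b x)) / M
            ≤ Real.exp (b x) / M := by gcongr; exact min_le_right _ _
          _ ≤ Real.exp (b x) / Zb := by
              gcongr
              exact le_max_right _ _
    calc Real.exp (-K) * (max (Real.exp (a x)) (Real.exp (b x)) / M)
        = Real.exp (-K) * max (Real.exp (a x)) (Real.exp (b x)) / M := by ring
      _ ≤ min (Real.exp (a x)) (Real.exp (b x)) / M := by gcongr
      _ ≤ min (p x) (q x) := h2
  have hmaxint : M ≤ ∫ x, max (Real.exp (a x)) (Real.exp (b x)) := by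
    refine max_le ?_ ?_
    · exact integral_mono hia himaxe fun x => le_max_left _ _
    · exact integral_mono hib himaxe fun x => le_max_right _ _
  have hminlb : Real.exp (-K) ≤ ∫ x, min (p x) (q x) := by
    have hmono := integral_mono
      (((himaxe.div_const M).const_mul (Real.exp (-K)))) himin hpw
    calc Real.exp (-K)
        = Real.exp (-K) * (M / M) := by rw [div_self hM0.ne']; ring
      _ ≤ Real.exp (-K) * ((∫ x, max (Real.exp (a x)) (Real.exp (b x))) / M) := by
          gcongr
      _ = ∫ x, Real.exp (-K) * (max (Real.exp (a x)) (Real.exp (b x)) / M) := by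
          rw [integral_const_mul, integral_div]
      _ ≤ ∫ x, min (p x) (q x) := hmono
  rw [hint_abs, hintp, hintq]
  linarith
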